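/- arXiv:1411.1120 — 3 statements merged into one kernel-verified Lean document; each statement's English description precedes it below -/
import Mathlib

section
/- Let r, x be real numbers with r² + x² ≠ 0, and let V_k, V_m be complex numbers. Define z = r + i·x, y = 1/z, I_km = y·(V_k − V_m), S_km = V_k·conj(I_km), P_km = Re(S_km), Q_km = Im(S_km). Then (P_km − r·|V_k|²/(r² + x²))² + (Q_km − x·|V_k|²/(r² + x²))² ≤ |V_k|²·|V_m|²/(r² + x²) (the circle inequality). -/
/-!
Expanding `conj I_km = conj y · (conj V_k - conj V_m)` gives
`S_km - |V_k|² · conj y = -V_k · conj V_m · conj y`, so `S_km` lies at distance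
`|V_k| |V_m| |y|` from `|V_k|² · conj y = |V_k|² · z / (r² + x²)`; the inequality holds with equality.
-/

open ComplexConjugate

theorem Complex.mul_conj_mul_sub_sub_eq (a b y : ℂ) :
    a * conj (y * (a - b)) - (‖a‖ ^ 2 : ℂ) * conj y = -(a * conj b * conj y) := by
  rw [map_mul, map_sub, ← Complex.mul_conj']
  ring

theorem Complex.norm_mul_conj_mul_sub_sub (a b y : ℂ) :
    ‖a * conj (y * (a - b)) - (‖a‖ ^ 2 : ℂ) * conj y‖ = ‖a‖ * ‖b‖ * ‖y‖ := by
  rw [Complex.mul_conj_mul_sub_sub_eq, norm_neg, norm_mul, norm_mul, Complex.norm_conj,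
    Complex.norm_conj]

theorem Complex.conj_inv_eq_ofReal_mul (z : ℂ) : conj z⁻¹ = ((Complex.normSq z)⁻¹ : ℝ) * z := by
  rw [Complex.inv_def, map_mul, Complex.conj_conj, Complex.conj_ofReal, mul_comm]

theorem Complex.sq_sub_re_add_sq_sub_im (w c : ℂ) :
    (w.re - c.re) ^ 2 + (w.im - c.im) ^ 2 = ‖w - c‖ ^ 2 := by
  rw [Complex.sq_norm, Complex.normSq_apply, Complex.sub_re, Complex.sub_im]
  ring

theorem circle_inequality_general (r x : ℝ) (Vk Vm : ℂ)
    (z y Ikm Skm : ℂ) (Pkm Qkm : ℝ)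
    (hz : z = (r : ℂ) + (x : ℂ) * Complex.I)
    (hy : y = 1 / z)
    (hI : Ikm = y * (Vk - Vm))
    (hS : Skm = Vk * (starRingEnd ℂ) Ikm)
    (hP : Pkm = Skm.re)
    (hQ : Qkm = Skm.im) :
    (Pkm - r * ‖Vk‖ ^ 2 / (r ^ 2 + x ^ 2)) ^ 2
      + (Qkm - x * ‖Vk‖ ^ 2 / (r ^ 2 + x ^ 2)) ^ 2
      ≤ ‖Vk‖ ^ 2 * ‖Vm‖ ^ 2 / (r ^ 2 + x ^ 2) := by
  subst hI hS hP hQ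
  have hz_re : z.re = r := by simp [hz]
  have hz_im : z.im = x := by simp [hz]
  have hnz : Complex.normSq z = r ^ 2 + x ^ 2 := hz ▸ Complex.normSq_add_mul_I r x
  have hcenter : (‖Vk‖ ^ 2 : ℂ) * conj y = ((‖Vk‖ ^ 2 / (r ^ 2 + x ^ 2) : ℝ) : ℂ) * z := by
    rw [hy, one_div, Complex.conj_inv_eq_ofReal_mul, hnz]
    push_cast
    ring
  have hy_sq : ‖y‖ ^ 2 = 1 / (r ^ 2 + x ^ 2) := by
    rw [hy, norm_div, norm_one, div_pow, Complex.sq_norm, hnz, one_pow]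
  apply le_of_eq
  calc _ = ‖Vk * conj (y * (Vk - Vm)) - (‖Vk‖ ^ 2 : ℂ) * conj y‖ ^ 2 := by
          rw [← Complex.sq_sub_re_add_sq_sub_im, hcenter, Complex.re_ofReal_mul,
            Complex.im_ofReal_mul, hz_re, hz_im]
          ring
    _ = ‖Vk‖ ^ 2 * ‖Vm‖ ^ 2 * ‖y‖ ^ 2 := by
          rw [Complex.norm_mul_conj_mul_sub_sub]
          ring
    _ = _ := by rw [hy_sq, mul_one_div]

theorem circle_inequality (r x : ℝ) (hrx : r ^ 2 + x ^ 2 ≠ 0) (Vk Vm : ℂ)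
    (z y Ikm Skm : ℂ) (Pkm Qkm : ℝ)
    (hz : z = (r : ℂ) + (x : ℂ) * Complex.I)
    (hy : y = 1 / z)
    (hI : Ikm = y * (Vk - Vm))
    (hS : Skm = Vk * (starRingEnd ℂ) Ikm)
    (hP : Pkm = Skm.re)
    (hQ : Qkm = Skm.im) :
    (Pkm - r * ‖Vk‖ ^ 2 / (r ^ 2 + x ^ 2)) ^ 2
      + (Qkm - x * ‖Vk‖ ^ 2 / (r ^ 2 + x ^ 2)) ^ 2
      ≤ ‖Vk‖ ^ 2 * ‖Vm‖ ^ 2 / (r ^ 2 + x ^ 2) :=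
  circle_inequality_general r x Vk Vm z y Ikm Skm Pkm Qkm hz hy hI hS hP hQ
end

section
/- Let r, x, g_sh, b_sh be real numbers with r² + x² ≠ 0, and let V_k, V_m be complex numbers. Define z = r + i·x, y = 1/z, y_sh = g_sh + i·b_sh, I_km = y·(V_k − V_m) + (1/2)·y_sh·V_k, S_km = V_k·conj(I_km), P_km = Re(S_km), Q_km = Im(S_km). Then (P_km − (r/(r² + x²) + g_sh/2)·|V_k|²)² + (Q_km − (x/(r² + x²) − b_sh/2)·|V_k|²)² ≤ |V_k|²·|V_m|²/(r² + x²) (the circle inequality with shunts). -/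
open Complex ComplexConjugate

/-!
Completing the square: with `c = conj y + conj y_sh / 2`, the power `S_km` satisfies
`S_km - c |V_k|² = -conj y · V_k · conj V_m`, so `S_km` lies on the circle of centre `c |V_k|²` and
radius `|y| |V_k| |V_m|`. For `y = 1 / (r + i x)` the centre has coordinates
`(r / (r² + x²) + g_sh / 2, x / (r² + x²) - b_sh / 2)` (times `|V_k|²`) and `|y|² = 1 / (r² + x²)`;
the inequality holds with equality.
-/

theorem conj_one_div_add_mul_I (r x : ℝ) :
    conj (1 / (r + x * I)) = ((r / (r ^ 2 + x ^ 2) : ℝ) : ℂ) + ((x / (r ^ 2 + x ^ 2) : ℝ) : ℂ) * I := by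
  rw [one_div, inv_def, normSq_add_mul_I, map_mul, conj_conj, conj_ofReal]
  push_cast
  ring

theorem sq_norm_one_div_add_mul_I (r x : ℝ) : ‖1 / ((r : ℂ) + x * I)‖ ^ 2 = 1 / (r ^ 2 + x ^ 2) := by
  rw [norm_div, norm_one, div_pow, one_pow, Complex.sq_norm, normSq_add_mul_I]

theorem power_sub_center_mul_sq_norm (y ysh Vk Vm : ℂ) :
    Vk * conj (y * (Vk - Vm) + 1 / 2 * ysh * Vk) - (conj y + conj ysh / 2) * (‖Vk‖ ^ 2 : ℝ)
      = -(conj y * Vk * conj Vm) := by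
  push_cast
  rw [← mul_conj']
  simp only [map_add, map_mul, map_sub, map_div₀, map_one, map_ofNat]
  ring

theorem sq_re_sub_add_sq_im_sub (w c : ℂ) (t : ℝ) :
    (w.re - c.re * t) ^ 2 + (w.im - c.im * t) ^ 2 = ‖w - c * t‖ ^ 2 := by
  rw [Complex.sq_norm, normSq_apply]
  simp only [sub_re, sub_im, re_mul_ofReal, im_mul_ofReal]
  ring

theorem circle_inequality_shunt_general (r x gsh bsh : ℝ) (Vk Vm : ℂ)
    (z y ysh Ikm Skm : ℂ) (Pkm Qkm : ℝ)
    (hz : z = (r : ℂ) + (x : ℂ) * Complex.I)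
    (hy : y = 1 / z)
    (hysh : ysh = (gsh : ℂ) + (bsh : ℂ) * Complex.I)
    (hI : Ikm = y * (Vk - Vm) + (1 / 2 : ℂ) * ysh * Vk)
    (hS : Skm = Vk * (starRingEnd ℂ) Ikm)
    (hP : Pkm = Skm.re)
    (hQ : Qkm = Skm.im) :
    (Pkm - (r / (r ^ 2 + x ^ 2) + gsh / 2) * ‖Vk‖ ^ 2) ^ 2
      + (Qkm - (x / (r ^ 2 + x ^ 2) - bsh / 2) * ‖Vk‖ ^ 2) ^ 2
      ≤ ‖Vk‖ ^ 2 * ‖Vm‖ ^ 2 / (r ^ 2 + x ^ 2) := by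
  subst hz hy hysh hI hS hP hQ
  set c := conj (1 / ((r : ℂ) + x * I)) + conj ((gsh : ℂ) + bsh * I) / 2
  have hc_re : c.re = r / (r ^ 2 + x ^ 2) + gsh / 2 := by
    simp only [c, conj_one_div_add_mul_I, add_re, mul_re, div_ofNat_re, conj_re, ofReal_re,
      ofReal_im, I_re, I_im]
    ring
  have hc_im : c.im = x / (r ^ 2 + x ^ 2) - bsh / 2 := by
    simp only [c, conj_one_div_add_mul_I, add_im, mul_im, div_ofNat_im, conj_im, ofReal_re,
      ofReal_im, I_re, I_im]
    ring
  rw [← hc_re, ← hc_im, sq_re_sub_add_sq_im_sub, power_sub_center_mul_sq_norm, norm_neg,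
    norm_mul, norm_mul, norm_conj, norm_conj, mul_pow, mul_pow, sq_norm_one_div_add_mul_I]
  exact (by ring : _ = _).le

theorem circle_inequality_shunt (r x gsh bsh : ℝ) (hrx : r ^ 2 + x ^ 2 ≠ 0) (Vk Vm : ℂ)
    (z y ysh Ikm Skm : ℂ) (Pkm Qkm : ℝ)
    (hz : z = (r : ℂ) + (x : ℂ) * Complex.I)
    (hy : y = 1 / z)
    (hysh : ysh = (gsh : ℂ) + (bsh : ℂ) * Complex.I)
    (hI : Ikm = y * (Vk - Vm) + (1 / 2 : ℂ) * ysh * Vk)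
    (hS : Skm = Vk * (starRingEnd ℂ) Ikm)
    (hP : Pkm = Skm.re)
    (hQ : Qkm = Skm.im) :
    (Pkm - (r / (r ^ 2 + x ^ 2) + gsh / 2) * ‖Vk‖ ^ 2) ^ 2
      + (Qkm - (x / (r ^ 2 + x ^ 2) - bsh / 2) * ‖Vk‖ ^ 2) ^ 2
      ≤ ‖Vk‖ ^ 2 * ‖Vm‖ ^ 2 / (r ^ 2 + x ^ 2) :=
  circle_inequality_shunt_general r x gsh bsh Vk Vm z y ysh Ikm Skm Pkm Qkm hz hy hysh hI hS hP hQ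
end

section
/- Let g, b, g_sh, b_sh, σ, e_k, f_k, e_m, f_m be real numbers, τ > 0, and g ≥ 0. Define y = g + i·b, y_sh = g_sh + i·b_sh, V_k = e_k + i·f_k, V_m = e_m + i·f_m, I_km = (1/τ)·y·((1/τ)·V_k − exp(i·σ)·V_m) + (1/(2τ²))·y_sh·V_k, I_mk = −(1/τ)·exp(−i·σ)·y·V_k + (y + y_sh/2)·V_m, P_km = Re(V_k·conj(I_km)), P_mk = Re(V_m·conj(I_mk)). Then g·(e_m − (1/τ)·(e_k·cos σ + f_k·sin σ))² + g·(f_m − (1/τ)·(f_k·cos σ − e_k·sin σ))² ≤ P_km + P_mk − (g_sh/2)·((e_k² + f_k²)/τ² + (e_m² + f_m²)) (the general loss inequality). -/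
/-!
An ideal transformer with tap ratio `N = τ e^{iσ}` conserves power: `V_k · conj I_km` equals
`V_k₁ · conj I_k₁m` for the internal voltage `V_k₁ = V_k / N` and the current `I_k₁m` of a plain
π-line from `k₁` to `m`. For a π-line the two injected complex powers add up to
`conj y · |V_k₁ - V_m|²` plus the power drawn by the two shunts, so taking real parts the claimed
inequality holds with equality: `g (e_m - …)² + g (f_m - …)²` is `g |V_m - V_k / N|²` in coordinates.
-/

open Complex ComplexConjugate

namespace Complex

theorem conj_inv_ofReal_mul_exp_mul_I (τ σ : ℝ) :
    conj ((τ : ℂ) * exp (σ * I))⁻¹ = (τ : ℂ)⁻¹ * exp (σ * I) := by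
  rw [map_inv₀, map_mul, conj_ofReal, ← exp_conj, map_mul, conj_ofReal, conj_I, mul_inv,
    ← exp_neg, neg_mul_eq_mul_neg, neg_neg]

theorem normSq_div_ofReal_mul_exp_mul_I (V : ℂ) (τ σ : ℝ) :
    normSq (V / (τ * exp (σ * I))) = normSq V / τ ^ 2 := by
  rw [normSq_div, normSq_mul, normSq_ofReal, normSq_eq_norm_sq (exp _), norm_exp_ofReal_mul_I]
  ring

theorem add_mul_I_div_ofReal_mul_exp_mul_I (e f τ σ : ℝ) :
    (e + f * I) / (τ * exp (σ * I))
      = ((e * Real.cos σ + f * Real.sin σ) / τ : ℝ)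
        + ((f * Real.cos σ - e * Real.sin σ) / τ : ℝ) * I := by
  rw [div_mul_eq_div_div, div_eq_mul_inv _ (exp _), ← exp_neg, ← neg_mul, exp_mul_I, cos_neg,
    sin_neg]
  push_cast
  linear_combination (-f * sin σ / τ) * I_sq

end Complex

namespace PowerFlow

noncomputable def activePower (V I : ℂ) : ℝ := (V * conj I).re

noncomputable def piLineCurrent (y ysh V₁ V₂ : ℂ) : ℂ := y * (V₁ - V₂) + ysh / 2 * V₁

theorem activePower_piLineCurrent_add (y ysh V₁ V₂ : ℂ) :
    activePower V₁ (piLineCurrent y ysh V₁ V₂) + activePower V₂ (piLineCurrent y ysh V₂ V₁)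
      = y.re * normSq (V₁ - V₂) + ysh.re / 2 * (normSq V₁ + normSq V₂) := by
  simp only [activePower, piLineCurrent, normSq_apply, mul_re, mul_im, conj_re, conj_im, add_re,
    add_im, sub_re, sub_im, div_ofNat_re, div_ofNat_im]
  ring

theorem activePower_conj_inv_mul (V N I : ℂ) :
    activePower V (conj N⁻¹ * I) = activePower (V / N) I := by
  rw [activePower, activePower, map_mul, conj_conj, div_eq_mul_inv, mul_assoc, mul_comm N⁻¹]

section Transformer

variable (τ σ : ℝ) (y ysh Vk Vm : ℂ)

theorem tap_side_current_eq_conj_inv_mul_piLineCurrent (hτ : τ ≠ 0) :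
    1 / (τ : ℂ) * y * (1 / (τ : ℂ) * Vk - exp (σ * I) * Vm) + 1 / (2 * (τ : ℂ) ^ 2) * ysh * Vk
      = conj (τ * exp (σ * I))⁻¹ * piLineCurrent y ysh (Vk / (τ * exp (σ * I))) Vm := by
  rw [conj_inv_ofReal_mul_exp_mul_I, piLineCurrent]
  have : (τ : ℂ) ≠ 0 := ofReal_ne_zero.mpr hτ
  have : exp (σ * I) ≠ 0 := exp_ne_zero _
  field_simp

theorem far_side_current_eq_piLineCurrent :
    -(1 / (τ : ℂ)) * exp (-σ * I) * y * Vk + (y + ysh / 2) * Vm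
      = piLineCurrent y ysh Vm (Vk / (τ * exp (σ * I))) := by
  rw [piLineCurrent, neg_mul (σ : ℂ), exp_neg, div_mul_eq_div_div, div_eq_mul_inv _ (exp _)]
  ring

end Transformer

end PowerFlow

open PowerFlow

theorem general_loss_inequality_general (g b gsh bsh σ ek fk em fm τ : ℝ) (hτ : 0 < τ)
    (y ysh Vk Vm Ikm Imk : ℂ) (Pkm Pmk : ℝ)
    (hy : y = (g : ℂ) + (b : ℂ) * Complex.I)
    (hysh : ysh = (gsh : ℂ) + (bsh : ℂ) * Complex.I)
    (hVk : Vk = (ek : ℂ) + (fk : ℂ) * Complex.I)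
    (hVm : Vm = (em : ℂ) + (fm : ℂ) * Complex.I)
    (hIkm : Ikm = (1 / (τ : ℂ)) * y * ((1 / (τ : ℂ)) * Vk - Complex.exp ((σ : ℂ) * Complex.I) * Vm)
        + (1 / (2 * (τ : ℂ) ^ 2)) * ysh * Vk)
    (hImk : Imk = -(1 / (τ : ℂ)) * Complex.exp (-(σ : ℂ) * Complex.I) * y * Vk
        + (y + ysh / 2) * Vm)
    (hPkm : Pkm = (Vk * (starRingEnd ℂ) Ikm).re)
    (hPmk : Pmk = (Vm * (starRingEnd ℂ) Imk).re) :
    g * (em - (1 / τ) * (ek * Real.cos σ + fk * Real.sin σ)) ^ 2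
      + g * (fm - (1 / τ) * (fk * Real.cos σ - ek * Real.sin σ)) ^ 2
      ≤ Pkm + Pmk - gsh / 2 * ((ek ^ 2 + fk ^ 2) / τ ^ 2 + (em ^ 2 + fm ^ 2)) := by
  have hPkm' : Pkm = activePower (Vk / (τ * exp (σ * I)))
      (piLineCurrent y ysh (Vk / (τ * exp (σ * I))) Vm) := by
    rw [hPkm, hIkm, tap_side_current_eq_conj_inv_mul_piLineCurrent τ σ y ysh Vk Vm hτ.ne',
      ← activePower_conj_inv_mul]
    rfl
  have hPmk' : Pmk = activePower Vm (piLineCurrent y ysh Vm (Vk / (τ * exp (σ * I)))) := by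
    rw [hPmk, hImk, far_side_current_eq_piLineCurrent]
    rfl
  rw [hPkm', hPmk', activePower_piLineCurrent_add, normSq_div_ofReal_mul_exp_mul_I, hVk,
    add_mul_I_div_ofReal_mul_exp_mul_I, hVm, hy, hysh]
  apply le_of_eq
  simp only [normSq_apply, sub_re, sub_im, add_re, add_im, mul_re, mul_im, I_re, I_im, ofReal_re,
    ofReal_im]
  field_simp
  ring

theorem general_loss_inequality (g b gsh bsh σ ek fk em fm τ : ℝ) (hτ : 0 < τ) (hg : 0 ≤ g)
    (y ysh Vk Vm Ikm Imk : ℂ) (Pkm Pmk : ℝ)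
    (hy : y = (g : ℂ) + (b : ℂ) * Complex.I)
    (hysh : ysh = (gsh : ℂ) + (bsh : ℂ) * Complex.I)
    (hVk : Vk = (ek : ℂ) + (fk : ℂ) * Complex.I)
    (hVm : Vm = (em : ℂ) + (fm : ℂ) * Complex.I)
    (hIkm : Ikm = (1 / (τ : ℂ)) * y * ((1 / (τ : ℂ)) * Vk - Complex.exp ((σ : ℂ) * Complex.I) * Vm)
        + (1 / (2 * (τ : ℂ) ^ 2)) * ysh * Vk)
    (hImk : Imk = -(1 / (τ : ℂ)) * Complex.exp (-(σ : ℂ) * Complex.I) * y * Vk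
        + (y + ysh / 2) * Vm)
    (hPkm : Pkm = (Vk * (starRingEnd ℂ) Ikm).re)
    (hPmk : Pmk = (Vm * (starRingEnd ℂ) Imk).re) :
    g * (em - (1 / τ) * (ek * Real.cos σ + fk * Real.sin σ)) ^ 2
      + g * (fm - (1 / τ) * (fk * Real.cos σ - ek * Real.sin σ)) ^ 2
      ≤ Pkm + Pmk - gsh / 2 * ((ek ^ 2 + fk ^ 2) / τ ^ 2 + (em ^ 2 + fm ^ 2)) :=
  general_loss_inequality_general g b gsh bsh σ ek fk em fm τ hτ y ysh Vk Vm Ikm Imk Pkm Pmk hy hysh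
    hVk hVm hIkm hImk hPkm hPmk
end
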